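/- Let H1(ā(1)), H0(ā(1)), Q1(ā(1)), Q0(a(0)) be the confounding bridge functions satisfying the latent-level bridge equations of the two-occasion proximal framework, and define for each ā(1) ∈ 𝒜 the quantity Ξ_{ā(1)} = 1{Ā(1)=ā(1)} Q1(ā(1)) [Y − H1(ā(1))] + 1{A(0)=a(0)} Q0(a(0)) [H1(ā(1)) − H0(ā(1))] + H0(ā(1)). Then E[Ξ_{ā(1)} | V] = E[Y_{ā(1)} | V], so that under the MSMM E[Y_{ā(1)}|V] = g(ā(1), V; β*), the moment condition E[ Σ_{ā(1)∈𝒜} d(ā(1), V) (Ξ_{ā(1)} − g(ā(1), V; β*)) ] = 0 holds for every measurable d. -/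

import Mathlib

/-!
By consistency (`Y = Y_ā` and `W(1) = W(1)_{a(0)}` where `Ā(1) = ā`),
`Ξ_ā − Y_ā = 1{A(0)=a(0)} (1{A(1)=a(1)} Q1 − Q0) (Y_ā − H1) + (1{A(0)=a(0)} Q0 − 1) (Y_ā − H0)`:
each summand is a function of the treatment proxies and treatments times an outcome residual.
Latent randomization makes the two factors conditionally independent given the latent strata
`(A(0), X̄(1), Ū(1))`, resp. `(X(0), U(0))`, so each conditional mean factorizes. The residual
has the same conditional mean on the sub-stratum receiving `ā` (again by independence; positivity
keeps that sub-stratum non-null), and there the outcome bridge equation makes it zero. Hence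
`Ξ_ā − Y_ā` is orthogonal to every function of `X(0)`, in particular of `V`.
-/

open Finset MeasureTheory

open scoped Classical

/-- Probability of an event on a finite outcome space with mass function `p`. -/
noncomputable def pr {Ω : Type*} [Fintype Ω] (p : Ω → ℝ) (E : Ω → Prop) : ℝ :=
  ∑ ω, if E ω then p ω else 0

/-- Conditional expectation `E[f | E]` on a finite outcome space. -/
noncomputable def cexp {Ω : Type*} [Fintype Ω] (p : Ω → ℝ) (f : Ω → ℝ) (E : Ω → Prop) : ℝ :=
  (∑ ω, if E ω then p ω * f ω else 0) / pr p E

/-- Conditional probability `P(E | F)` on a finite outcome space. -/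
noncomputable def cprob {Ω : Type*} [Fintype Ω] (p : Ω → ℝ) (E F : Ω → Prop) : ℝ :=
  pr p (fun ω => E ω ∧ F ω) / pr p F

/-- Expectation on a finite outcome space. -/
noncomputable def pexp {Ω : Type*} [Fintype Ω] (p : Ω → ℝ) (f : Ω → ℝ) : ℝ :=
  ∑ ω, p ω * f ω

/-- `S` is conditionally independent of `T` given `C`:  for every pair of (bounded) test
functions `F, G` and every value `c` of `C` with positive probability, the conditional
expectation of the product factorizes. -/
def CondIndep {Ω α β γ : Type*} [Fintype Ω] (p : Ω → ℝ)
    (S : Ω → α) (T : Ω → β) (C : Ω → γ) : Prop :=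
  ∀ (F : α → ℝ) (G : β → ℝ) (c : γ), pr p (fun ω => C ω = c) ≠ 0 →
    cexp p (fun ω => F (S ω) * G (T ω)) (fun ω => C ω = c) =
      cexp p (fun ω => F (S ω)) (fun ω => C ω = c) *
        cexp p (fun ω => G (T ω)) (fun ω => C ω = c)

section FiniteProbability

variable {Ω : Type*} [Fintype Ω] {p : Ω → ℝ}

lemma pr_congr {E E' : Ω → Prop} (h : ∀ ω, E ω ↔ E' ω) : pr p E = pr p E' := by
  obtain rfl : E = E' := funext fun ω => propext (h ω)
  rfl

lemma cexp_congr {E E' : Ω → Prop} {f g : Ω → ℝ} (hE : ∀ ω, E ω ↔ E' ω)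
    (hfg : ∀ ω, E ω → f ω = g ω) : cexp p f E = cexp p g E' := by
  obtain rfl : E = E' := funext fun ω => propext (hE ω)
  unfold cexp
  congr 1
  refine sum_congr rfl fun ω _ => ?_
  split_ifs with h
  · rw [hfg ω h]
  · rfl

lemma pexp_add (f g : Ω → ℝ) : pexp p (fun ω => f ω + g ω) = pexp p f + pexp p g := by
  simp only [pexp, mul_add, sum_add_distrib]

lemma pexp_sum {ι : Type*} (s : Finset ι) (f : ι → Ω → ℝ) :
    pexp p (fun ω => ∑ i ∈ s, f i ω) = ∑ i ∈ s, pexp p (f i) := by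
  simp only [pexp, mul_sum]
  exact sum_comm

lemma cexp_eq_pexp_div (f : Ω → ℝ) (E : Ω → Prop) :
    cexp p f E = pexp p (fun ω => if E ω then f ω else 0) / pr p E := by
  unfold cexp pexp
  congr 1
  refine sum_congr rfl fun ω _ => ?_
  by_cases h : E ω <;> simp [h]

lemma pr_eq_pexp (E : Ω → Prop) : pr p E = pexp p (fun ω => if E ω then 1 else 0) := by
  unfold pr pexp
  refine sum_congr rfl fun ω _ => ?_
  by_cases h : E ω <;> simp [h]

lemma cexp_sub (f g : Ω → ℝ) (E : Ω → Prop) :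
    cexp p (fun ω => f ω - g ω) E = cexp p f E - cexp p g E := by
  unfold cexp
  rw [← sub_div, ← sum_sub_distrib]
  congr 1
  refine sum_congr rfl fun ω _ => ?_
  split_ifs <;> ring

lemma cexp_const_mul (k : ℝ) (f : Ω → ℝ) (E : Ω → Prop) :
    cexp p (fun ω => k * f ω) E = k * cexp p f E := by
  unfold cexp
  rw [mul_div_assoc', mul_sum]
  congr 1
  refine sum_congr rfl fun ω _ => ?_
  split_ifs <;> ring

lemma cexp_const {E : Ω → Prop} (hE : pr p E ≠ 0) (k : ℝ) : cexp p (fun _ => k) E = k := by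
  rw [cexp_eq_pexp_div, div_eq_iff hE, pr_eq_pexp, pexp, pexp, mul_sum]
  refine sum_congr rfl fun ω _ => ?_
  split_ifs <;> ring

lemma p_eq_zero_of_pr_eq_zero (hp : ∀ ω, 0 ≤ p ω) {E : Ω → Prop} (hE : pr p E = 0) {ω : Ω}
    (hω : E ω) : p ω = 0 := by
  have hnonneg : ∀ ω ∈ univ, 0 ≤ if E ω then p ω else 0 := fun ω _ => by
    split_ifs
    exacts [hp ω, le_rfl]
  simpa [hω] using (sum_eq_zero_iff_of_nonneg hnonneg).1 hE ω (mem_univ ω)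

lemma pr_ne_zero_of_pr_and_ne_zero (hp : ∀ ω, 0 ≤ p ω) {E B : Ω → Prop}
    (h : pr p (fun ω => E ω ∧ B ω) ≠ 0) : pr p E ≠ 0 := fun hE =>
  h <| sum_eq_zero fun ω _ => by
    split_ifs with hω
    exacts [p_eq_zero_of_pr_eq_zero hp hE hω.1, rfl]

lemma pr_and_ne_zero_of_cprob_pos {E F : Ω → Prop} (h : 0 < cprob p E F) :
    pr p (fun ω => E ω ∧ F ω) ≠ 0 := fun h0 => by
  simp [cprob, h0] at h

lemma pexp_eq_sum_pr_mul_cexp (hp : ∀ ω, 0 ≤ p ω) {γ : Type*} (C : Ω → γ) (f : Ω → ℝ) :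
    pexp p f = ∑ c ∈ univ.image C, pr p (fun ω => C ω = c) * cexp p f (fun ω => C ω = c) := by
  rw [pexp, ← sum_fiberwise_of_maps_to fun ω _ => mem_image_of_mem C (mem_univ ω)]
  refine sum_congr rfl fun c _ => ?_
  by_cases hc : pr p (fun ω => C ω = c) = 0
  · rw [hc, zero_mul]
    exact sum_eq_zero fun ω hω => by
      rw [p_eq_zero_of_pr_eq_zero hp hc (mem_filter.1 hω).2, zero_mul]
  · rw [cexp, mul_div_cancel₀ _ hc, sum_filter]

lemma pexp_eq_zero_of_cexp_eq_zero (hp : ∀ ω, 0 ≤ p ω) {γ : Type*} (C : Ω → γ) {f : Ω → ℝ}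
    (hf : ∀ c, pr p (fun ω => C ω = c) ≠ 0 → cexp p f (fun ω => C ω = c) = 0) :
    pexp p f = 0 := by
  rw [pexp_eq_sum_pr_mul_cexp hp C]
  refine sum_eq_zero fun c _ => ?_
  by_cases hc : pr p (fun ω => C ω = c) = 0
  · rw [hc, zero_mul]
  · rw [hf c hc, mul_zero]

lemma pexp_mul_sub_eq_zero_of_cexp_eq (hp : ∀ ω, 0 ≤ p ω) {γ : Type*} (V : Ω → γ)
    {f : Ω → ℝ} {m : γ → ℝ}
    (hm : ∀ c, pr p (fun ω => V ω = c) ≠ 0 → cexp p f (fun ω => V ω = c) = m c)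
    (d : γ → ℝ) : pexp p (fun ω => d (V ω) * (f ω - m (V ω))) = 0 := by
  refine pexp_eq_zero_of_cexp_eq_zero hp V fun c hc => ?_
  rw [cexp_congr (g := fun ω => d c * (f ω - m c)) (fun _ => Iff.rfl) fun ω hω => by rw [hω],
    cexp_const_mul, cexp_sub, cexp_const hc, hm c hc, sub_self, mul_zero]

end FiniteProbability

namespace CondIndep

variable {Ω α β γ : Type*} [Fintype Ω] {p : Ω → ℝ} {S : Ω → α} {T : Ω → β} {C : Ω → γ}

lemma cexp_and_eq (hST : CondIndep p S T C) (hp : ∀ ω, 0 ≤ p ω) {c : γ} {B : α → Prop}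
    (hcB : pr p (fun ω => C ω = c ∧ B (S ω)) ≠ 0) (G : β → ℝ) :
    cexp p (fun ω => G (T ω)) (fun ω => C ω = c ∧ B (S ω)) =
      cexp p (fun ω => G (T ω)) (fun ω => C ω = c) := by
  have hc := pr_ne_zero_of_pr_and_ne_zero hp hcB
  have h := hST (fun a => if B a then 1 else 0) G c hc
  rw [cexp_eq_pexp_div (fun ω => _ * _), cexp_eq_pexp_div (fun ω => _), div_mul_eq_mul_div,
    div_left_inj' hc] at h
  rw [cexp_eq_pexp_div, div_eq_iff hcB, pr_eq_pexp, mul_comm]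
  convert h using 2 <;> congr 1 <;> funext ω <;> by_cases hC : C ω = c <;>
    by_cases hB : B (S ω) <;> simp [hC, hB]

lemma cexp_mul_eq_zero (hST : CondIndep p S T C) (hp : ∀ ω, 0 ≤ p ω) {c : γ} {B : α → Prop}
    (hcB : pr p (fun ω => C ω = c ∧ B (S ω)) ≠ 0) {G : β → ℝ}
    (hG : cexp p (fun ω => G (T ω)) (fun ω => C ω = c ∧ B (S ω)) = 0) (F : α → ℝ) :
    cexp p (fun ω => F (S ω) * G (T ω)) (fun ω => C ω = c) = 0 := by
  rw [hST F G c (pr_ne_zero_of_pr_and_ne_zero hp hcB), ← hST.cexp_and_eq hp hcB, hG, mul_zero]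

end CondIndep

section TwoOccasions

variable {Ω 𝒳0 𝒳1 𝒵0 𝒵1 𝒲0 𝒲1 𝒰0 𝒰1 : Type*} [Fintype Ω] {p : Ω → ℝ}
  {A0 A1 : Ω → Bool} {X0 : Ω → 𝒳0} {X1 : Ω → 𝒳1} {Z0 : Ω → 𝒵0} {Z1 : Ω → 𝒵1}
  {W0 : Ω → 𝒲0} {W1 : Ω → 𝒲1} {U0 : Ω → 𝒰0} {U1 : Ω → 𝒰1}
  {Y : Ω → ℝ} {Y' : Bool → Bool → Ω → ℝ} {W1' : Bool → Ω → 𝒲1}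

lemma pexp_mul_occasion1_residual_eq_zero (hp : ∀ ω, 0 ≤ p ω)
    (hconsY : ∀ ω, Y ω = Y' (A0 ω) (A1 ω) ω) (hconsW : ∀ ω, W1 ω = W1' (A0 ω) ω) (b0 b1 : Bool)
    (hpos1 : ∀ u0 u1 x0 x1,
      pr p (fun ω => A0 ω = b0 ∧ U0 ω = u0 ∧ U1 ω = u1 ∧ X0 ω = x0 ∧ X1 ω = x1) ≠ 0 →
      0 < cprob p (fun ω => A1 ω = b1)
        (fun ω => A0 ω = b0 ∧ U0 ω = u0 ∧ U1 ω = u1 ∧ X0 ω = x0 ∧ X1 ω = x1))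
    (hLR1 : CondIndep p (fun ω => (Z0 ω, Z1 ω, A1 ω)) (fun ω => (W0 ω, W1' b0 ω, Y' b0 b1 ω))
      (fun ω => (A0 ω, X0 ω, X1 ω, U0 ω, U1 ω)))
    {h1 : 𝒲0 × 𝒲1 → 𝒳0 × 𝒳1 → ℝ}
    (hbridge1 : ∀ u0 u1 x0 x1,
      pr p (fun ω => A0 ω = b0 ∧ A1 ω = b1 ∧ U0 ω = u0 ∧ U1 ω = u1 ∧
        X0 ω = x0 ∧ X1 ω = x1) ≠ 0 →
      cexp p (fun ω => h1 (W0 ω, W1 ω) (X0 ω, X1 ω))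
          (fun ω => A0 ω = b0 ∧ A1 ω = b1 ∧ U0 ω = u0 ∧ U1 ω = u1 ∧
            X0 ω = x0 ∧ X1 ω = x1) =
        cexp p Y (fun ω => A0 ω = b0 ∧ A1 ω = b1 ∧ U0 ω = u0 ∧ U1 ω = u1 ∧
          X0 ω = x0 ∧ X1 ω = x1))
    (q0 : 𝒵0 → 𝒳0 → ℝ) (q1 : 𝒵0 × 𝒵1 → 𝒳0 × 𝒳1 → ℝ) (φ : 𝒳0 → ℝ) :
    pexp p (fun ω => φ (X0 ω) *
      ((if A0 ω = b0 ∧ A1 ω = b1 then (1 : ℝ) else 0) * q1 (Z0 ω, Z1 ω) (X0 ω, X1 ω) *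
          (Y ω - h1 (W0 ω, W1 ω) (X0 ω, X1 ω)) +
        (if A0 ω = b0 then (1 : ℝ) else 0) * q0 (Z0 ω) (X0 ω) *
          (h1 (W0 ω, W1 ω) (X0 ω, X1 ω) - Y' b0 b1 ω))) = 0 := by
  refine pexp_eq_zero_of_cexp_eq_zero hp (fun ω => (A0 ω, X0 ω, X1 ω, U0 ω, U1 ω)) ?_
  rintro ⟨a0, x0, x1, u0, u1⟩ hc
  obtain rfl | ha := eq_or_ne a0 b0
  swap
  · rw [cexp_congr (g := fun _ => 0) (fun _ => Iff.rfl) fun ω hω => ?_, cexp_const hc]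
    simp only [Prod.mk.injEq] at hω
    simp [hω.1, ha]
  have hcB : pr p (fun ω => (A0 ω, X0 ω, X1 ω, U0 ω, U1 ω) = (a0, x0, x1, u0, u1) ∧
      A1 ω = b1) ≠ 0 := by
    have hpos := hpos1 u0 u1 x0 x1 <|
      ne_of_eq_of_ne (pr_congr fun ω => by simp only [Prod.mk.injEq]; tauto) hc
    exact ne_of_eq_of_ne (pr_congr fun ω => by simp only [Prod.mk.injEq]; tauto)
      (pr_and_ne_zero_of_cprob_pos hpos)
  have hiff : ∀ ω, ((A0 ω, X0 ω, X1 ω, U0 ω, U1 ω) = (a0, x0, x1, u0, u1) ∧ A1 ω = b1) ↔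
      (A0 ω = a0 ∧ A1 ω = b1 ∧ U0 ω = u0 ∧ U1 ω = u1 ∧ X0 ω = x0 ∧ X1 ω = x1) := fun ω => by
    simp only [Prod.mk.injEq]; tauto
  have hresid : cexp p (fun ω => Y' a0 b1 ω - h1 (W0 ω, W1' a0 ω) (x0, x1))
      (fun ω => (A0 ω, X0 ω, X1 ω, U0 ω, U1 ω) = (a0, x0, x1, u0, u1) ∧ A1 ω = b1) = 0 := by
    rw [cexp_sub, sub_eq_zero, cexp_congr hiff (g := Y) fun ω hω => ?_,
      cexp_congr hiff (g := fun ω => h1 (W0 ω, W1 ω) (X0 ω, X1 ω)) fun ω hω => ?_,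
      hbridge1 u0 u1 x0 x1 (pr_congr hiff ▸ hcB)]
    · obtain ⟨hA0, -, -, -, hX0, hX1⟩ := (hiff ω).1 hω
      rw [hconsW, hA0, hX0, hX1]
    · obtain ⟨hA0, hA1, -⟩ := (hiff ω).1 hω
      rw [hconsY, hA0, hA1]
  rw [cexp_congr (g := fun ω => φ x0 * (((if A1 ω = b1 then (1 : ℝ) else 0) *
      q1 (Z0 ω, Z1 ω) (x0, x1) - q0 (Z0 ω) x0) * (Y' a0 b1 ω - h1 (W0 ω, W1' a0 ω) (x0, x1))))
    (fun _ => Iff.rfl) fun ω hω => ?_, cexp_const_mul,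
    hLR1.cexp_mul_eq_zero hp (B := fun s => s.2.2 = b1)
      (G := fun t => t.2.2 - h1 (t.1, t.2.1) (x0, x1)) hcB hresid
      (fun s => (if s.2.2 = b1 then (1 : ℝ) else 0) * q1 (s.1, s.2.1) (x0, x1) - q0 s.1 x0),
    mul_zero]
  simp only [Prod.mk.injEq] at hω
  obtain ⟨hA0, hX0, hX1, -, -⟩ := hω
  rw [hconsY, hconsW, hA0, hX0, hX1]
  by_cases hA1 : A1 ω = b1
  · simp only [hA1, and_self, ↓reduceIte]; ring
  · simp only [hA1, and_false, ↓reduceIte]; ring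

lemma pexp_mul_occasion0_residual_eq_zero (hp : ∀ ω, 0 ≤ p ω) (b0 : Bool)
    (hpos0 : ∀ u0 x0, pr p (fun ω => U0 ω = u0 ∧ X0 ω = x0) ≠ 0 →
      0 < cprob p (fun ω => A0 ω = b0) (fun ω => U0 ω = u0 ∧ X0 ω = x0))
    {Ya : Ω → ℝ}
    (hLR0 : CondIndep p (fun ω => (Z0 ω, A0 ω)) (fun ω => (W0 ω, Ya ω)) (fun ω => (X0 ω, U0 ω)))
    {h0 : 𝒲0 → 𝒳0 → ℝ}
    (hbridge0 : ∀ u0 x0, pr p (fun ω => A0 ω = b0 ∧ U0 ω = u0 ∧ X0 ω = x0) ≠ 0 →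
      cexp p Ya (fun ω => A0 ω = b0 ∧ U0 ω = u0 ∧ X0 ω = x0) =
        cexp p (fun ω => h0 (W0 ω) (X0 ω)) (fun ω => A0 ω = b0 ∧ U0 ω = u0 ∧ X0 ω = x0))
    (q0 : 𝒵0 → 𝒳0 → ℝ) (φ : 𝒳0 → ℝ) :
    pexp p (fun ω => φ (X0 ω) *
      ((if A0 ω = b0 then (1 : ℝ) else 0) * q0 (Z0 ω) (X0 ω) * (Ya ω - h0 (W0 ω) (X0 ω)) +
        h0 (W0 ω) (X0 ω) - Ya ω)) = 0 := by
  refine pexp_eq_zero_of_cexp_eq_zero hp (fun ω => (X0 ω, U0 ω)) ?_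
  rintro ⟨x0, u0⟩ hc
  have hiff : ∀ ω, ((X0 ω, U0 ω) = (x0, u0) ∧ A0 ω = b0) ↔
      (A0 ω = b0 ∧ U0 ω = u0 ∧ X0 ω = x0) := fun ω => by
    simp only [Prod.mk.injEq]; tauto
  have hcB : pr p (fun ω => (X0 ω, U0 ω) = (x0, u0) ∧ A0 ω = b0) ≠ 0 := by
    have hpos := hpos0 u0 x0 <|
      ne_of_eq_of_ne (pr_congr fun ω => by simp only [Prod.mk.injEq]; tauto) hc
    exact ne_of_eq_of_ne (pr_congr fun ω => by simp only [Prod.mk.injEq]; tauto)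
      (pr_and_ne_zero_of_cprob_pos hpos)
  have hresid : cexp p (fun ω => Ya ω - h0 (W0 ω) x0)
      (fun ω => (X0 ω, U0 ω) = (x0, u0) ∧ A0 ω = b0) = 0 := by
    rw [cexp_sub, sub_eq_zero, cexp_congr hiff (g := Ya) fun _ _ => rfl,
      cexp_congr hiff (g := fun ω => h0 (W0 ω) (X0 ω)) fun ω hω => by rw [(Prod.mk.inj hω.1).1],
      hbridge0 u0 x0 (pr_congr hiff ▸ hcB)]
  rw [cexp_congr (g := fun ω => φ x0 * (((if A0 ω = b0 then (1 : ℝ) else 0) * q0 (Z0 ω) x0 - 1) *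
      (Ya ω - h0 (W0 ω) x0))) (fun _ => Iff.rfl) fun ω hω => ?_, cexp_const_mul,
    hLR0.cexp_mul_eq_zero hp (B := fun s => s.2 = b0) (G := fun t => t.2 - h0 t.1 x0) hcB hresid
      (fun s => (if s.2 = b0 then (1 : ℝ) else 0) * q0 s.1 x0 - 1),
    mul_zero]
  rw [(Prod.mk.inj hω).1]
  ring

end TwoOccasions

theorem stmt_12_general {Ω 𝒳0 𝒳1 𝒵0 𝒵1 𝒲0 𝒲1 𝒰0 𝒰1 𝒱 : Type*} [Fintype Ω]
    (p : Ω → ℝ) (hp : ∀ ω, 0 ≤ p ω)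
    (A0 A1 : Ω → Bool) (X0 : Ω → 𝒳0) (X1 : Ω → 𝒳1)
    (Z0 : Ω → 𝒵0) (Z1 : Ω → 𝒵1) (W0 : Ω → 𝒲0) (W1 : Ω → 𝒲1)
    (U0 : Ω → 𝒰0) (U1 : Ω → 𝒰1)
    (Y : Ω → ℝ) (Y' : Bool → Bool → Ω → ℝ) (W1' : Bool → Ω → 𝒲1)
    (h1 : 𝒲0 × 𝒲1 → Bool × Bool → 𝒳0 × 𝒳1 → ℝ)
    (h0 : 𝒲0 → Bool × Bool → 𝒳0 → ℝ)
    (q0 : 𝒵0 → Bool → 𝒳0 → ℝ)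
    (q1 : 𝒵0 × 𝒵1 → Bool × Bool → 𝒳0 × 𝒳1 → ℝ)
    (v : 𝒳0 → 𝒱)
    -- consistency and positivity
    (hconsY : ∀ ω, Y ω = Y' (A0 ω) (A1 ω) ω)
    (hconsW : ∀ ω, W1 ω = W1' (A0 ω) ω)
    (hpos0 : ∀ (a : Bool) u0 x0, pr p (fun ω => U0 ω = u0 ∧ X0 ω = x0) ≠ 0 →
      0 < cprob p (fun ω => A0 ω = a) (fun ω => U0 ω = u0 ∧ X0 ω = x0))
    (hpos1 : ∀ (a a' : Bool) u0 u1 x0 x1,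
      pr p (fun ω => A0 ω = a' ∧ U0 ω = u0 ∧ U1 ω = u1 ∧ X0 ω = x0 ∧ X1 ω = x1) ≠ 0 →
      0 < cprob p (fun ω => A1 ω = a)
        (fun ω => A0 ω = a' ∧ U0 ω = u0 ∧ U1 ω = u1 ∧ X0 ω = x0 ∧ X1 ω = x1))
    -- sequential proximal latent randomization
    (hLR1 : ∀ b0 b1 : Bool, CondIndep p (fun ω => (Z0 ω, Z1 ω, A1 ω))
      (fun ω => (W0 ω, W1' b0 ω, Y' b0 b1 ω))
      (fun ω => (A0 ω, X0 ω, X1 ω, U0 ω, U1 ω)))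
    (hLR0 : ∀ b0 b1 : Bool, CondIndep p (fun ω => (Z0 ω, A0 ω))
      (fun ω => (W0 ω, Y' b0 b1 ω)) (fun ω => (X0 ω, U0 ω)))
    -- latent-level outcome bridge equations for (h1, h0)
    (hbridgeh1 : ∀ (b0 b1 : Bool) u0 u1 x0 x1,
      pr p (fun ω => A0 ω = b0 ∧ A1 ω = b1 ∧ U0 ω = u0 ∧ U1 ω = u1 ∧
        X0 ω = x0 ∧ X1 ω = x1) ≠ 0 →
      cexp p (fun ω => h1 (W0 ω, W1 ω) (b0, b1) (X0 ω, X1 ω))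
          (fun ω => A0 ω = b0 ∧ A1 ω = b1 ∧ U0 ω = u0 ∧ U1 ω = u1 ∧
            X0 ω = x0 ∧ X1 ω = x1) =
        cexp p Y (fun ω => A0 ω = b0 ∧ A1 ω = b1 ∧ U0 ω = u0 ∧ U1 ω = u1 ∧
          X0 ω = x0 ∧ X1 ω = x1))
    (hbridgeh0 : ∀ (b0 b1 : Bool) u0 x0,
      pr p (fun ω => A0 ω = b0 ∧ U0 ω = u0 ∧ X0 ω = x0) ≠ 0 →
      cexp p (Y' b0 b1) (fun ω => A0 ω = b0 ∧ U0 ω = u0 ∧ X0 ω = x0) =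
        cexp p (fun ω => h0 (W0 ω) (b0, b1) (X0 ω))
          (fun ω => A0 ω = b0 ∧ U0 ω = u0 ∧ X0 ω = x0))
    -- the augmented (doubly-robust) estimating function Ξ
    (Xi : Bool × Bool → Ω → ℝ)
    (hXi : ∀ (b0 b1 : Bool) ω, Xi (b0, b1) ω =
      (if A0 ω = b0 ∧ A1 ω = b1 then (1 : ℝ) else 0) *
          q1 (Z0 ω, Z1 ω) (b0, b1) (X0 ω, X1 ω) *
          (Y ω - h1 (W0 ω, W1 ω) (b0, b1) (X0 ω, X1 ω)) +
        (if A0 ω = b0 then (1 : ℝ) else 0) * q0 (Z0 ω) b0 (X0 ω) *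
          (h1 (W0 ω, W1 ω) (b0, b1) (X0 ω, X1 ω) - h0 (W0 ω) (b0, b1) (X0 ω)) +
        h0 (W0 ω) (b0, b1) (X0 ω))
    -- the MSMM
    (g : Bool × Bool → 𝒱 → ℝ)
    (hmsmm : ∀ (b0 b1 : Bool) (c : 𝒱), pr p (fun ω => v (X0 ω) = c) ≠ 0 →
      cexp p (Y' b0 b1) (fun ω => v (X0 ω) = c) = g (b0, b1) c) :
    (∀ (b0 b1 : Bool) (c : 𝒱), pr p (fun ω => v (X0 ω) = c) ≠ 0 →
      cexp p (Xi (b0, b1)) (fun ω => v (X0 ω) = c) =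
        cexp p (Y' b0 b1) (fun ω => v (X0 ω) = c)) ∧
    (∀ d : Bool × Bool → 𝒱 → ℝ,
      pexp p (fun ω => ∑ b : Bool × Bool,
        d b (v (X0 ω)) * (Xi b ω - g b (v (X0 ω)))) = 0) := by
  have key : ∀ b0 b1 (φ : 𝒳0 → ℝ),
      pexp p (fun ω => φ (X0 ω) * (Xi (b0, b1) ω - Y' b0 b1 ω)) = 0 := by
    intro b0 b1 φ
    have h1term := pexp_mul_occasion1_residual_eq_zero hp hconsY hconsW b0 b1 (hpos1 b1 b0)
      (hLR1 b0 b1) (h1 := fun w x => h1 w (b0, b1) x) (hbridgeh1 b0 b1)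
      (fun z x => q0 z b0 x) (fun z x => q1 z (b0, b1) x) φ
    have h0term := pexp_mul_occasion0_residual_eq_zero hp b0 (hpos0 b0) (hLR0 b0 b1)
      (h0 := fun w x => h0 w (b0, b1) x) (hbridgeh0 b0 b1) (fun z x => q0 z b0 x) φ
    convert congrArg₂ (· + ·) h1term h0term using 1
    · rw [← pexp_add]
      congr 1
      funext ω
      rw [hXi]
      ring
    · rw [add_zero]
  refine ⟨fun b0 b1 c _ => ?_, fun d => ?_⟩
  · rw [← sub_eq_zero, ← cexp_sub, cexp_eq_pexp_div, div_eq_zero_iff]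
    left
    convert key b0 b1 (fun x => if v x = c then 1 else 0) using 2
    funext ω
    split_ifs <;> simp
  · rw [pexp_sum]
    refine sum_eq_zero fun ⟨b0, b1⟩ _ => ?_
    convert congrArg₂ (· + ·) (key b0 b1 (fun x => d (b0, b1) (v x)))
      (pexp_mul_sub_eq_zero_of_cexp_eq hp (fun ω => v (X0 ω)) (hmsmm b0 b1) (d (b0, b1)))
      using 1
    · rw [← pexp_add]
      congr 1
      funext ω
      ring
    · rw [add_zero]

/-- unbiasedness of the doubly-robust-form estimating function when all
confounding bridge functions satisfy their latent-level bridge equations: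
`E[Ξ_{ā(1)} | V] = E[Y_{ā(1)} | V]`, and consequently, under the MSMM
`E[Y_{ā(1)} | V] = g(ā(1), V; β*)`, the moment condition
`E[Σ_{ā(1)∈𝒜} d(ā(1), V)(Ξ_{ā(1)} − g(ā(1), V; β*))] = 0` holds for every `d`. -/
theorem stmt_12 {Ω 𝒳0 𝒳1 𝒵0 𝒵1 𝒲0 𝒲1 𝒰0 𝒰1 𝒱 : Type*} [Fintype Ω]
    (p : Ω → ℝ) (hp : ∀ ω, 0 ≤ p ω) (hsum : ∑ ω, p ω = 1)
    (A0 A1 : Ω → Bool) (X0 : Ω → 𝒳0) (X1 : Ω → 𝒳1)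
    (Z0 : Ω → 𝒵0) (Z1 : Ω → 𝒵1) (W0 : Ω → 𝒲0) (W1 : Ω → 𝒲1)
    (U0 : Ω → 𝒰0) (U1 : Ω → 𝒰1)
    (Y : Ω → ℝ) (Y' : Bool → Bool → Ω → ℝ) (W1' : Bool → Ω → 𝒲1)
    (h1 : 𝒲0 × 𝒲1 → Bool × Bool → 𝒳0 × 𝒳1 → ℝ)
    (h0 : 𝒲0 → Bool × Bool → 𝒳0 → ℝ)
    (q0 : 𝒵0 → Bool → 𝒳0 → ℝ)
    (q1 : 𝒵0 × 𝒵1 → Bool × Bool → 𝒳0 × 𝒳1 → ℝ)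
    (v : 𝒳0 → 𝒱)
    -- consistency and positivity
    (hconsY : ∀ ω, Y ω = Y' (A0 ω) (A1 ω) ω)
    (hconsW : ∀ ω, W1 ω = W1' (A0 ω) ω)
    (hpos0 : ∀ (a : Bool) u0 x0, pr p (fun ω => U0 ω = u0 ∧ X0 ω = x0) ≠ 0 →
      0 < cprob p (fun ω => A0 ω = a) (fun ω => U0 ω = u0 ∧ X0 ω = x0))
    (hpos1 : ∀ (a a' : Bool) u0 u1 x0 x1,
      pr p (fun ω => A0 ω = a' ∧ U0 ω = u0 ∧ U1 ω = u1 ∧ X0 ω = x0 ∧ X1 ω = x1) ≠ 0 →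
      0 < cprob p (fun ω => A1 ω = a)
        (fun ω => A0 ω = a' ∧ U0 ω = u0 ∧ U1 ω = u1 ∧ X0 ω = x0 ∧ X1 ω = x1))
    -- sequential proximal latent randomization
    (hLR1 : ∀ b0 b1 : Bool, CondIndep p (fun ω => (Z0 ω, Z1 ω, A1 ω))
      (fun ω => (W0 ω, W1' b0 ω, Y' b0 b1 ω))
      (fun ω => (A0 ω, X0 ω, X1 ω, U0 ω, U1 ω)))
    (hLR0 : ∀ b0 b1 : Bool, CondIndep p (fun ω => (Z0 ω, A0 ω))
      (fun ω => (W0 ω, Y' b0 b1 ω)) (fun ω => (X0 ω, U0 ω)))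
    -- latent-level outcome bridge equations for (h1, h0)
    (hbridgeh1 : ∀ (b0 b1 : Bool) u0 u1 x0 x1,
      pr p (fun ω => A0 ω = b0 ∧ A1 ω = b1 ∧ U0 ω = u0 ∧ U1 ω = u1 ∧
        X0 ω = x0 ∧ X1 ω = x1) ≠ 0 →
      cexp p (fun ω => h1 (W0 ω, W1 ω) (b0, b1) (X0 ω, X1 ω))
          (fun ω => A0 ω = b0 ∧ A1 ω = b1 ∧ U0 ω = u0 ∧ U1 ω = u1 ∧
            X0 ω = x0 ∧ X1 ω = x1) =
        cexp p Y (fun ω => A0 ω = b0 ∧ A1 ω = b1 ∧ U0 ω = u0 ∧ U1 ω = u1 ∧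
          X0 ω = x0 ∧ X1 ω = x1))
    (hbridgeh0 : ∀ (b0 b1 : Bool) u0 x0,
      pr p (fun ω => A0 ω = b0 ∧ U0 ω = u0 ∧ X0 ω = x0) ≠ 0 →
      cexp p (Y' b0 b1) (fun ω => A0 ω = b0 ∧ U0 ω = u0 ∧ X0 ω = x0) =
        cexp p (fun ω => h0 (W0 ω) (b0, b1) (X0 ω))
          (fun ω => A0 ω = b0 ∧ U0 ω = u0 ∧ X0 ω = x0))
    -- latent-level treatment bridge equations for (q0, q1)
    (hbridgeq0 : ∀ (b0 : Bool) u0 x0,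
      pr p (fun ω => A0 ω = b0 ∧ U0 ω = u0 ∧ X0 ω = x0) ≠ 0 →
      (cprob p (fun ω => A0 ω = b0) (fun ω => U0 ω = u0 ∧ X0 ω = x0))⁻¹ =
        cexp p (fun ω => q0 (Z0 ω) b0 (X0 ω))
          (fun ω => A0 ω = b0 ∧ U0 ω = u0 ∧ X0 ω = x0))
    (hbridgeq1 : ∀ (b0 b1 : Bool) u0 u1 x0 x1,
      pr p (fun ω => A0 ω = b0 ∧ A1 ω = b1 ∧ U0 ω = u0 ∧ U1 ω = u1 ∧
        X0 ω = x0 ∧ X1 ω = x1) ≠ 0 →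
      cexp p (fun ω => q0 (Z0 ω) b0 (X0 ω))
          (fun ω => A0 ω = b0 ∧ U0 ω = u0 ∧ U1 ω = u1 ∧ X0 ω = x0 ∧ X1 ω = x1) /
        cprob p (fun ω => A1 ω = b1)
          (fun ω => A0 ω = b0 ∧ U0 ω = u0 ∧ U1 ω = u1 ∧ X0 ω = x0 ∧ X1 ω = x1) =
      cexp p (fun ω => q1 (Z0 ω, Z1 ω) (b0, b1) (X0 ω, X1 ω))
        (fun ω => A0 ω = b0 ∧ A1 ω = b1 ∧ U0 ω = u0 ∧ U1 ω = u1 ∧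
          X0 ω = x0 ∧ X1 ω = x1))
    -- the augmented (doubly-robust) estimating function Ξ
    (Xi : Bool × Bool → Ω → ℝ)
    (hXi : ∀ (b0 b1 : Bool) ω, Xi (b0, b1) ω =
      (if A0 ω = b0 ∧ A1 ω = b1 then (1 : ℝ) else 0) *
          q1 (Z0 ω, Z1 ω) (b0, b1) (X0 ω, X1 ω) *
          (Y ω - h1 (W0 ω, W1 ω) (b0, b1) (X0 ω, X1 ω)) +
        (if A0 ω = b0 then (1 : ℝ) else 0) * q0 (Z0 ω) b0 (X0 ω) *
          (h1 (W0 ω, W1 ω) (b0, b1) (X0 ω, X1 ω) - h0 (W0 ω) (b0, b1) (X0 ω)) +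
        h0 (W0 ω) (b0, b1) (X0 ω))
    -- the MSMM
    (g : Bool × Bool → 𝒱 → ℝ)
    (hmsmm : ∀ (b0 b1 : Bool) (c : 𝒱), pr p (fun ω => v (X0 ω) = c) ≠ 0 →
      cexp p (Y' b0 b1) (fun ω => v (X0 ω) = c) = g (b0, b1) c) :
    (∀ (b0 b1 : Bool) (c : 𝒱), pr p (fun ω => v (X0 ω) = c) ≠ 0 →
      cexp p (Xi (b0, b1)) (fun ω => v (X0 ω) = c) =
        cexp p (Y' b0 b1) (fun ω => v (X0 ω) = c)) ∧
    (∀ d : Bool × Bool → 𝒱 → ℝ,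
      pexp p (fun ω => ∑ b : Bool × Bool,
        d b (v (X0 ω)) * (Xi b ω - g b (v (X0 ω)))) = 0) :=
  stmt_12_general p hp A0 A1 X0 X1 Z0 Z1 W0 W1 U0 U1 Y Y' W1' h1 h0 q0 q1 v hconsY hconsW hpos0
    hpos1 hLR1 hLR0 hbridgeh1 hbridgeh0 Xi hXi g hmsmm
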